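/- Let X be a locally compact Hausdorff space and let Γ be a topological abelian group (written additively) that is separating for X. Let k, l ∈ ℕ and let a_0, …, a_k, b_0, …, b_l ∈ X be (not necessarily distinct) points such that Σ_{i=0}^{k} f(a_i) = Σ_{j=0}^{l} f(b_j) for every continuous function f : X → Γ. Then k = l, and for every x ∈ X the number of indices i with a_i = x equals the number of indices j with b_j = x; in particular {a_0, …, a_k} = {b_0, …, b_k} as sets. -/

import Mathlib

open Set Function

/-- A topological abelian group `Γ` is separating for a space `X` if for every finite
`F ⊆ X` and `x ∉ F` there is a continuous `f : X → Γ` with `f x` of infinite order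
and `f` vanishing on `F`. -/
def IsSeparating (Γ : Type*) [TopologicalSpace Γ] [AddCommGroup Γ]
    (X : Type*) [TopologicalSpace X] : Prop :=
  ∀ F : Set X, F.Finite → ∀ x ∉ F, ∃ f : X → Γ,
    Continuous f ∧ (∀ n : ℕ, 1 ≤ n → n • f x ≠ 0) ∧ ∀ y ∈ F, f y = 0

/-! Separate a point `x` from all the other points `a i`, `b j` by a continuous `f` with
`f x` of infinite order. Both sides of `∑ f (a i) = ∑ f (b j)` collapse to multiples of `f x`,
namely `#{i | a i = x} • f x` and `#{j | b j = x} • f x`, so the two multiplicities agree.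
Hence `a` and `b` have the same multiset of values. -/

open Finset in
theorem Finset.sum_comp_eq_card_fiber_nsmul {ι X M : Type*} [AddCommMonoid M] [DecidableEq X]
    (s : Finset ι) (a : ι → X) (f : X → M) (x : X) (hf : ∀ i ∈ s, a i ≠ x → f (a i) = 0) :
    ∑ i ∈ s, f (a i) = #{i ∈ s | a i = x} • f x :=
  calc ∑ i ∈ s, f (a i)
      = ∑ i ∈ s with a i = x, f (a i) :=
        (sum_filter_of_ne fun i hi h => not_not.1 (mt (hf i hi) h)).symm
    _ = ∑ i ∈ s with a i = x, f x := sum_congr rfl fun i hi => by rw [(mem_filter.1 hi).2]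
    _ = #{i ∈ s | a i = x} • f x := sum_const _

namespace IsSeparating

variable {Γ X ι κ : Type*} [TopologicalSpace Γ] [AddCommGroup Γ] [TopologicalSpace X]
  [Fintype ι] [Fintype κ]

open Finset in
theorem card_fiber_eq [DecidableEq X] (hsep : IsSeparating Γ X) {a : ι → X} {b : κ → X}
    (hab : ∀ f : X → Γ, Continuous f → ∑ i, f (a i) = ∑ j, f (b j)) (x : X) :
    #{i | a i = x} = #{j | b j = x} := by
  obtain ⟨f, hf, hord, hvan⟩ := hsep ((range a ∪ range b) \ {x})
    ((finite_range a).union (finite_range b)).sdiff x (by simp)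
  have hinj : Injective fun n : ℕ => n • f x :=
    injective_nsmul_iff_not_isOfFinAddOrder.2 fun h =>
      let ⟨n, hn, hn0⟩ := isOfFinAddOrder_iff_nsmul_eq_zero.1 h
      hord n hn hn0
  refine hinj (?_ : _ • f x = _ • f x)
  rw [← sum_comp_eq_card_fiber_nsmul _ _ _ _ fun i _ hi => hvan _ ⟨Or.inl ⟨i, rfl⟩, hi⟩,
    ← sum_comp_eq_card_fiber_nsmul _ _ _ _ fun j _ hj => hvan _ ⟨Or.inr ⟨j, rfl⟩, hj⟩]
  exact hab f hf

theorem map_univ_eq (hsep : IsSeparating Γ X) {a : ι → X} {b : κ → X}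
    (hab : ∀ f : X → Γ, Continuous f → ∑ i, f (a i) = ∑ j, f (b j)) :
    Finset.univ.val.map a = Finset.univ.val.map b := by
  classical
  ext x
  simp only [Multiset.count_map, eq_comm (a := x)]
  exact hsep.card_fiber_eq hab x

end IsSeparating

theorem stmt9_general {X : Type*} [TopologicalSpace X]
    {Γ : Type*} [TopologicalSpace Γ] [AddCommGroup Γ]
    (hsep : IsSeparating Γ X)
    (k l : ℕ) (a : Fin (k + 1) → X) (b : Fin (l + 1) → X)
    (hab : ∀ f : X → Γ, Continuous f → ∑ i, f (a i) = ∑ j, f (b j)) :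
    k = l ∧ (∀ x : X, {i : Fin (k + 1) | a i = x}.ncard = {j : Fin (l + 1) | b j = x}.ncard) ∧
      Set.range a = Set.range b := by
  classical
  have hmap := hsep.map_univ_eq hab
  refine ⟨?_, fun x => ?_, ?_⟩
  · simpa using congrArg Multiset.card hmap
  · simpa only [ncard_eq_toFinset_card', toFinset_ofPred] using hsep.card_fiber_eq hab x
  · ext x
    simpa only [mem_range, Multiset.mem_map, Finset.mem_val, Finset.mem_univ, true_and]
      using Iff.of_eq (congrArg (x ∈ ·) hmap)

theorem stmt9 {X : Type*} [TopologicalSpace X] [T2Space X] [LocallyCompactSpace X]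
    {Γ : Type*} [TopologicalSpace Γ] [AddCommGroup Γ] [IsTopologicalAddGroup Γ]
    (hsep : IsSeparating Γ X)
    (k l : ℕ) (a : Fin (k + 1) → X) (b : Fin (l + 1) → X)
    (hab : ∀ f : X → Γ, Continuous f → ∑ i, f (a i) = ∑ j, f (b j)) :
    k = l ∧ (∀ x : X, {i : Fin (k + 1) | a i = x}.ncard = {j : Fin (l + 1) | b j = x}.ncard) ∧
      Set.range a = Set.range b :=
  stmt9_general hsep k l a b hab
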